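/- arXiv:1501.04970 — 2 statements merged into one kernel-verified Lean document; each statement's English description precedes it below -/
import Mathlib

section
/- Let (Z_k)_{k≥0} be a stationary Gaussian sequence with E[Z_0^2] < ∞, let λ > 0, let q be an even positive integer, and set R_{Q,q}(λ, Z_k) := H_q(Z_k − e^{−λk} Z_0) − H_q(Z_k). Then for every p ≥ 1 there exists a constant c(λ, q, E[Z_0^2]) such that the L^p norm of (1/n) Σ_{k=0}^{n−1} R_{Q,q}(λ, Z_k) is at most c(λ, q, E[Z_0^2]) / n for all n ≥ 1. -/
/-!
For `|x|, |y| ≤ M` with `M ≥ 1`, a real polynomial satisfies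
`|P x - P y| ≤ C_P |x - y| M ^ deg P`. With `x = Z_k - e^{-λk} Z_0` and `y = Z_k`, the `k`-th
remainder is therefore at most `C_P e^{-λk} (1 + |Z_k| + |Z_0|) ^ (deg P + 1)`. By Minkowski's
inequality and stationarity, the `L^p` norm of the last factor is at most
`(1 + 2 ‖Z_0‖_{p (deg P + 1)}) ^ (deg P + 1)`, finite since Gaussian variables have moments of all
orders. Summing the geometric series `∑ e^{-λk}` bounds the `L^p` norm of the unnormalised sum
uniformly in `n`, which gives the rate `1/n`.
-/

open MeasureTheory ProbabilityTheory Polynomial Finset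
open scoped ENNReal

theorem Polynomial.abs_eval_sub_eval_le (P : ℝ[X]) {x y M : ℝ} (hx : |x| ≤ M) (hy : |y| ≤ M)
    (hM : 1 ≤ M) :
    |P.eval x - P.eval y|
      ≤ (∑ i ∈ range (P.natDegree + 1), |P.coeff i| * i) * |x - y| * M ^ P.natDegree := by
  rw [eval_eq_sum_range, eval_eq_sum_range, ← sum_sub_distrib, sum_mul, sum_mul]
  refine (abs_sum_le_sum_abs _ _).trans (sum_le_sum fun i hi => ?_)
  have hpow : |x ^ i - y ^ i| ≤ |x - y| * i * M ^ P.natDegree :=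
    calc |x ^ i - y ^ i| ≤ |x - y| * i * max |x| |y| ^ (i - 1) := abs_pow_sub_pow_le ..
      _ ≤ |x - y| * i * M ^ (i - 1) := by gcongr; exact max_le hx hy
      _ ≤ |x - y| * i * M ^ P.natDegree := by
          gcongr
          have := mem_range.mp hi; omega
  rw [← mul_sub, abs_mul]
  calc |P.coeff i| * |x ^ i - y ^ i| ≤ |P.coeff i| * (|x - y| * i * M ^ P.natDegree) := by
        gcongr
    _ = _ := by ring

theorem Polynomial.abs_eval_sub_mul_sub_eval_le (P : ℝ[X]) {e : ℝ} (he0 : 0 ≤ e) (he1 : e ≤ 1)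
    (x y : ℝ) :
    |P.eval (x - e * y) - P.eval x|
      ≤ (∑ i ∈ range (P.natDegree + 1), |P.coeff i| * i) * e
          * (1 + |x| + |y|) ^ (P.natDegree + 1) := by
  have hey : |e * y| = e * |y| := by rw [abs_mul, abs_of_nonneg he0]
  have hey_le : e * |y| ≤ |y| := mul_le_of_le_one_left (abs_nonneg y) he1
  calc |P.eval (x - e * y) - P.eval x|
      ≤ (∑ i ∈ range (P.natDegree + 1), |P.coeff i| * i) * |x - e * y - x|
          * (1 + |x| + |y|) ^ P.natDegree := by
        refine P.abs_eval_sub_eval_le ?_ ?_ ?_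
        · linarith [abs_sub x (e * y), abs_nonneg x]
        · linarith [abs_nonneg y]
        · linarith [abs_nonneg x, abs_nonneg y]
    _ ≤ (∑ i ∈ range (P.natDegree + 1), |P.coeff i| * i) * (e * (1 + |x| + |y|))
          * (1 + |x| + |y|) ^ P.natDegree := by
        rw [sub_sub_cancel_left, abs_neg, hey]
        gcongr
        linarith [abs_nonneg x]
    _ = _ := by ring

section

variable {Ω : Type*} [MeasurableSpace Ω] {μ : Measure Ω}

lemma eLpNorm_sum_range_le_of_le_geometric {E : Type*} [NormedAddCommGroup E] {f : ℕ → Ω → E}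
    (hf : ∀ k, AEStronglyMeasurable (f k) μ) {p : ℝ≥0∞} (hp : 1 ≤ p) {C r : ℝ≥0∞}
    (hfk : ∀ k, eLpNorm (f k) p μ ≤ C * r ^ k) (n : ℕ) :
    eLpNorm (fun ω => ∑ k ∈ range n, f k ω) p μ ≤ C * (1 - r)⁻¹ := by
  calc eLpNorm (fun ω => ∑ k ∈ range n, f k ω) p μ
      ≤ ∑ k ∈ range n, eLpNorm (f k) p μ := by
        simpa only [← Finset.sum_apply] using eLpNorm_sum_le (fun k _ => hf k) hp
    _ ≤ ∑ k ∈ range n, C * r ^ k := sum_le_sum fun k _ => hfk k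
    _ ≤ ∑' k, C * r ^ k := ENNReal.sum_le_tsum _
    _ = C * (1 - r)⁻¹ := by rw [ENNReal.tsum_mul_left, ENNReal.tsum_geometric]

lemma eLpNorm_one_add_abs_add_abs_pow_le [IsProbabilityMeasure μ] {X Y : Ω → ℝ}
    (hX : AEStronglyMeasurable X μ) (hY : AEStronglyMeasurable Y μ) {p : ℝ≥0∞} (hp : 1 ≤ p)
    {m : ℕ} (hm : m ≠ 0) :
    eLpNorm (fun ω => (1 + |X ω| + |Y ω|) ^ m) p μ
      ≤ (1 + eLpNorm X (p * m) μ + eLpNorm Y (p * m) μ) ^ m := by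
  have hnorm : (fun ω => (1 + |X ω| + |Y ω|) ^ m) = fun ω => ‖1 + |X ω| + |Y ω|‖ ^ (m : ℝ) := by
    ext ω
    rw [Real.norm_of_nonneg (by positivity), Real.rpow_natCast]
  rw [hnorm, eLpNorm_norm_rpow _ (by positivity), ENNReal.ofReal_natCast, ENNReal.rpow_natCast]
  have hpm : 1 ≤ p * m := one_le_mul hp (by exact_mod_cast Nat.one_le_iff_ne_zero.mpr hm)
  gcongr
  calc eLpNorm (fun ω => 1 + |X ω| + |Y ω|) (p * m) μ
      ≤ eLpNorm (fun _ => (1 : ℝ)) (p * m) μ + eLpNorm (fun ω => |X ω|) (p * m) μ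
          + eLpNorm (fun ω => |Y ω|) (p * m) μ := by
        refine (eLpNorm_add_le (by fun_prop) (by fun_prop) hpm).trans ?_
        gcongr
        exact eLpNorm_add_le aestronglyMeasurable_const (by fun_prop) hpm
    _ = 1 + eLpNorm X (p * m) μ + eLpNorm Y (p * m) μ := by
        simp only [← Real.norm_eq_abs, eLpNorm_norm]
        rw [eLpNorm_const _ (by positivity) (IsProbabilityMeasure.ne_zero μ)]
        simp

lemma identDistrib_of_map_shift_eq {β : Type*} [MeasurableSpace β] {X : ℕ → Ω → β}
    (hX : ∀ k, Measurable (X k))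
    (hshift : ∀ m, μ.map (fun ω i => X (i + m) ω) = μ.map (fun ω i => X i ω)) (k : ℕ) :
    IdentDistrib (X k) (X 0) μ μ := by
  have hpath : IdentDistrib (fun ω i => X (i + k) ω) (fun ω i => X i ω) μ μ :=
    ⟨(measurable_pi_lambda _ fun i => hX _).aemeasurable,
      (measurable_pi_lambda _ fun i => hX i).aemeasurable, hshift k⟩
  simpa [Function.comp_def] using hpath.comp (measurable_pi_apply 0)

theorem exists_eLpNorm_sum_eval_sub_eval_le [IsProbabilityMeasure μ] {X : ℕ → Ω → ℝ}
    (hX : ∀ k, Measurable (X k)) (hident : ∀ k, IdentDistrib (X k) (X 0) μ μ)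
    (hmom : ∀ r, r ≠ ∞ → MemLp (X 0) r μ) (P : ℝ[X]) {lam : ℝ} (hlam : 0 < lam)
    {p : ℝ≥0∞} (hp : 1 ≤ p) (hp_top : p ≠ ∞) :
    ∃ K : ℝ≥0∞, K ≠ ∞ ∧ ∀ n : ℕ, eLpNorm (fun ω => ∑ k ∈ range n,
      (P.eval (X k ω - Real.exp (-lam * k) * X 0 ω) - P.eval (X k ω))) p μ ≤ K := by
  set N := P.natDegree + 1
  set C := ∑ i ∈ range (P.natDegree + 1), |P.coeff i| * i
  set B := (1 + eLpNorm (X 0) (p * N) μ + eLpNorm (X 0) (p * N) μ) ^ N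
  set r := ENNReal.ofReal (Real.exp (-lam))
  have hB : B ≠ ∞ := by
    have := (hmom (p * N) (by finiteness)).eLpNorm_ne_top
    finiteness
  have hr : r < 1 := by
    rw [ENNReal.ofReal_lt_one, Real.exp_lt_one_iff]
    linarith
  refine ⟨ENNReal.ofReal C * B * (1 - r)⁻¹, ?_, eLpNorm_sum_range_le_of_le_geometric
    (fun k => by fun_prop) hp fun k => ?_⟩
  · have : (1 - r)⁻¹ ≠ ∞ := ENNReal.inv_ne_top.mpr (tsub_pos_of_lt hr).ne'
    finiteness
  have hexp0 : 0 ≤ Real.exp (-lam * k) := (Real.exp_pos _).le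
  have hexp1 : Real.exp (-lam * k) ≤ 1 := Real.exp_le_one_iff.mpr (by nlinarith)
  calc eLpNorm (fun ω => P.eval (X k ω - Real.exp (-lam * k) * X 0 ω) - P.eval (X k ω)) p μ
      ≤ eLpNorm ((C * Real.exp (-lam * k)) • fun ω => (1 + |X k ω| + |X 0 ω|) ^ N) p μ :=
        eLpNorm_mono_real fun ω => P.abs_eval_sub_mul_sub_eval_le hexp0 hexp1 _ _
    _ = ENNReal.ofReal (C * Real.exp (-lam * k))
          * eLpNorm (fun ω => (1 + |X k ω| + |X 0 ω|) ^ N) p μ := by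
        rw [eLpNorm_const_smul, Real.enorm_of_nonneg (by positivity)]
    _ ≤ ENNReal.ofReal (C * Real.exp (-lam * k)) * B := by
        gcongr
        refine (eLpNorm_one_add_abs_add_abs_pow_le (hX k).aestronglyMeasurable
          (hX 0).aestronglyMeasurable hp (Nat.succ_ne_zero _)).trans ?_
        rw [(hident k).eLpNorm_eq]
    _ = ENNReal.ofReal C * B * r ^ k := by
        rw [ENNReal.ofReal_mul (by positivity), ← ENNReal.ofReal_pow (Real.exp_pos _).le,
          ← Real.exp_nat_mul]
        ring_nf

lemma rpow_integral_abs_rpow_le_of_eLpNorm_le {F : Ω → ℝ} (hF : AEStronglyMeasurable F μ)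
    {p : ℝ} (hp : 0 < p) {K : ℝ≥0∞} (hK : K ≠ ∞) (hFK : eLpNorm F (ENNReal.ofReal p) μ ≤ K) :
    (∫ ω, |F ω| ^ p ∂μ) ^ (1 / p) ≤ K.toReal := by
  have hmem : MemLp F (ENNReal.ofReal p) μ := ⟨hF, hFK.trans_lt hK.lt_top⟩
  have hnorm := hmem.eLpNorm_eq_integral_rpow_norm (by simpa using hp) ENNReal.ofReal_ne_top
  simp only [ENNReal.toReal_ofReal hp.le, Real.norm_eq_abs] at hnorm
  calc (∫ ω, |F ω| ^ p ∂μ) ^ (1 / p) = (eLpNorm F (ENNReal.ofReal p) μ).toReal := by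
        rw [hnorm, ENNReal.toReal_ofReal (by positivity), one_div]
    _ ≤ K.toReal := ENNReal.toReal_mono hK hFK

end

theorem Lp_rate_hermite_remainder_sum_general
    {Ω : Type*} [MeasureSpace Ω] [IsProbabilityMeasure (ℙ : Measure Ω)]
    (Z : ℕ → Ω → ℝ) (hmeas : ∀ k, Measurable (Z k))
    (hGauss : ∀ (s : Finset ℕ) (c : ℕ → ℝ), ∃ v : NNReal,
      Measure.map (fun ω => ∑ i ∈ s, c i * Z i ω) ℙ = gaussianReal 0 v)
    (hStat : ∀ m : ℕ, Measure.map (fun ω (i : ℕ) => Z (i + m) ω) ℙ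
      = Measure.map (fun ω (i : ℕ) => Z i ω) ℙ)
    (lam : ℝ) (hlam : 0 < lam) (q : ℕ) :
    ∀ p : ℝ, 1 ≤ p → ∃ c : ℝ, 0 < c ∧ ∀ n : ℕ, 1 ≤ n →
      (∫ ω, |(1 / (n : ℝ)) * ∑ k ∈ Finset.range n,
          ((Polynomial.aeval (Z k ω - Real.exp (-lam * k) * Z 0 ω)
              (Polynomial.hermite q) : ℝ)
            - (Polynomial.aeval (Z k ω) (Polynomial.hermite q) : ℝ))| ^ p ∂ℙ) ^ (1 / p)
      ≤ c / n := by
  intro p hp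
  obtain ⟨v, hv⟩ := hGauss {0} fun _ => 1
  simp only [sum_singleton, one_mul] at hv
  have hgauss : HasGaussianLaw (Z 0) ℙ := ⟨by rw [hv]; infer_instance⟩
  obtain ⟨K, hK, hsum⟩ := exists_eLpNorm_sum_eval_sub_eval_le hmeas
    (identDistrib_of_map_shift_eq hmeas hStat) (fun r hr => hgauss.memLp hr)
    ((hermite q).map (algebraMap ℤ ℝ)) hlam (ENNReal.one_le_ofReal.mpr hp) ENNReal.ofReal_ne_top
  refine ⟨K.toReal + 1, by positivity, fun n _ => ?_⟩
  simp only [← eval_map_algebraMap]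
  calc _ ≤ (ENNReal.ofReal (1 / n) * K).toReal := by
        refine rpow_integral_abs_rpow_le_of_eLpNorm_le (by fun_prop) (by linarith)
          (by finiteness) ?_
        refine (eLpNorm_const_smul (1 / (n : ℝ)) _ _ _).trans_le ?_
        rw [Real.enorm_of_nonneg (by positivity)]
        exact mul_le_mul_right (hsum n) _
    _ ≤ (K.toReal + 1) / n := by
        rw [ENNReal.toReal_mul, ENNReal.toReal_ofReal (by positivity), one_div_mul_eq_div]
        gcongr
        linarith

theorem Lp_rate_hermite_remainder_sum
    {Ω : Type*} [MeasureSpace Ω] [IsProbabilityMeasure (ℙ : Measure Ω)]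
    (Z : ℕ → Ω → ℝ) (hmeas : ∀ k, Measurable (Z k))
    (hGauss : ∀ (s : Finset ℕ) (c : ℕ → ℝ), ∃ v : NNReal,
      Measure.map (fun ω => ∑ i ∈ s, c i * Z i ω) ℙ = gaussianReal 0 v)
    (hStat : ∀ m : ℕ, Measure.map (fun ω (i : ℕ) => Z (i + m) ω) ℙ
      = Measure.map (fun ω (i : ℕ) => Z i ω) ℙ)
    (hL2 : Integrable (fun ω => (Z 0 ω) ^ 2) ℙ)
    (lam : ℝ) (hlam : 0 < lam) (q : ℕ) (hq : Even q) (hq0 : 0 < q) :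
    ∀ p : ℝ, 1 ≤ p → ∃ c : ℝ, 0 < c ∧ ∀ n : ℕ, 1 ≤ n →
      (∫ ω, |(1 / (n : ℝ)) * ∑ k ∈ Finset.range n,
          ((Polynomial.aeval (Z k ω - Real.exp (-lam * k) * Z 0 ω)
              (Polynomial.hermite q) : ℝ)
            - (Polynomial.aeval (Z k ω) (Polynomial.hermite q) : ℝ))| ^ p ∂ℙ) ^ (1 / p)
      ≤ c / n :=
  Lp_rate_hermite_remainder_sum_general Z hmeas hGauss hStat lam hlam q
end

section
/- Let H ∈ (1/2, 1) and α > 0. Define U^α_0 = H^{(1−α)H} ∫_0^{H} r^{(α−1)H} dB_r evaluated with a_0 = H, where B is a fractional Brownian motion with Hurst index H. Then E[(U^α_0)^2] = ((2H−1) H^{2H} / α) · B(1 − H + αH, 2H − 1), where B(·,·) is the Beta function. -/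
/-!
After `hU` the variance is an explicit double integral of the symmetric kernel
`x^c y^c |x - y|^β` over the square `(0, H)²`, with `c = (α - 1) H` and `β = 2H - 2`.
By symmetry it is twice the integral over the triangle `x < y`; there the inner integral
is, after the substitution `x = y z`, the Beta integral `y^(2c+β+1) B(c+1, β+1)`, and the outer
one is elementary. Working with lower Lebesgue integrals makes Tonelli available without any
integrability bookkeeping; finiteness is only needed at the end to return to Bochner integrals.
-/

open MeasureTheory ProbabilityTheory Real Set
open scoped ENNReal

/-- The Beta function `B(a,b) = ∫_0^1 z^(a-1) (1-z)^(b-1) dz`. -/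
noncomputable def betaFn (a b : ℝ) : ℝ :=
  ∫ z in Set.Ioo (0:ℝ) 1, z ^ (a-1) * (1-z) ^ (b-1)

theorem lintegral_lintegral_eq_two_mul_of_symm {α : Type*} [TopologicalSpace α] [LinearOrder α]
    [OrderClosedTopology α] [SecondCountableTopology α] [MeasurableSpace α]
    [OpensMeasurableSpace α] {μ : Measure α} [SFinite μ] [NullSingletonClass μ]
    {f : α → α → ℝ≥0∞}
    (hf : Measurable (Function.uncurry f)) (hsymm : ∀ x y, f x y = f y x) (s : Set α) :
    ∫⁻ y in s, ∫⁻ x in s, f x y ∂μ ∂μ = 2 * ∫⁻ y in s, ∫⁻ x in s ∩ Iio y, f x y ∂μ ∂μ := by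
  set g : α → α → ℝ≥0∞ := fun x y => if x < y then f x y else 0
  have hg : Measurable (Function.uncurry g) :=
    Measurable.ite (measurableSet_lt measurable_fst measurable_snd) hf measurable_const
  have hsplit : ∀ y, ∫⁻ x in s, f x y ∂μ = ∫⁻ x in s, g x y ∂μ + ∫⁻ x in s, g y x ∂μ := by
    intro y
    rw [← lintegral_add_left hg.of_uncurry_right]
    refine lintegral_congr_ae ?_
    filter_upwards [ae_restrict_of_ae (μ.ae_ne y)] with x hx
    rcases hx.lt_or_gt with h | h
    · simp [g, h, h.not_gt]
    · simp [g, h, h.not_gt, hsymm x y]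
  have hlower : ∀ y, ∫⁻ x in s, g x y ∂μ = ∫⁻ x in s ∩ Iio y, f x y ∂μ := by
    intro y
    have hg_eq : (fun x => g x y) = (Iio y).indicator (fun x => f x y) := by
      ext x; simp [g, Set.indicator]
    rw [hg_eq, lintegral_indicator measurableSet_Iio, Measure.restrict_restrict measurableSet_Iio,
      inter_comm]
  calc ∫⁻ y in s, ∫⁻ x in s, f x y ∂μ ∂μ
      = ∫⁻ y in s, ∫⁻ x in s, g x y ∂μ ∂μ + ∫⁻ y in s, ∫⁻ x in s, g y x ∂μ ∂μ := by
        simp_rw [hsplit]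
        exact lintegral_add_left ((hg.comp measurable_swap).lintegral_prod_right') _
    _ = 2 * ∫⁻ y in s, ∫⁻ x in s, g x y ∂μ ∂μ := by
        rw [lintegral_lintegral_swap hg.aemeasurable, two_mul]
    _ = _ := by simp_rw [hlower]

theorem integral_integral_eq_toReal_lintegral_lintegral {α β : Type*} [MeasurableSpace α]
    [MeasurableSpace β] {μ : Measure α} {ν : Measure β} [SFinite ν] {f : α → β → ℝ}
    (hf : Measurable (Function.uncurry f)) (hf_nonneg : ∀ᵐ x ∂μ, ∀ᵐ y ∂ν, 0 ≤ f x y)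
    (hf_fin : ∫⁻ x, ∫⁻ y, ENNReal.ofReal (f x y) ∂ν ∂μ ≠ ∞) :
    ∫ x, ∫ y, f x y ∂ν ∂μ = (∫⁻ x, ∫⁻ y, ENNReal.ofReal (f x y) ∂ν ∂μ).toReal := by
  have hF : Measurable fun x => ∫⁻ y, ENNReal.ofReal (f x y) ∂ν :=
    (ENNReal.measurable_ofReal.comp hf).lintegral_prod_right'
  rw [← integral_toReal hF.aemeasurable (ae_lt_top hF hf_fin)]
  refine integral_congr_ae ?_
  filter_upwards [hf_nonneg] with x hx
  exact integral_eq_lintegral_of_nonneg_ae hx hf.of_uncurry_left.aestronglyMeasurable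

theorem betaFn_nonneg (a b : ℝ) : 0 ≤ betaFn a b :=
  setIntegral_nonneg measurableSet_Ioo fun _ hz =>
    mul_nonneg (rpow_nonneg hz.1.le _) (rpow_nonneg (sub_nonneg.2 hz.2.le) _)

theorem integral_rpow_mul_rpow_sub {c β y : ℝ} (hy : 0 < y) :
    ∫ x in Ioo 0 y, x ^ c * (y - x) ^ β = y ^ (c + β + 1) * betaFn (c + 1) (β + 1) := by
  have hscale := intervalIntegral.smul_integral_comp_mul_left
    (a := 0) (b := 1) (fun x => x ^ c * (y - x) ^ β) y
  rw [mul_zero, mul_one] at hscale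
  rw [← integral_Ioc_eq_integral_Ioo, ← intervalIntegral.integral_of_le hy.le, ← hscale,
    intervalIntegral.integral_of_le zero_le_one, integral_Ioc_eq_integral_Ioo, betaFn,
    smul_eq_mul, ← integral_const_mul, ← integral_const_mul]
  refine setIntegral_congr_fun measurableSet_Ioo fun z hz => ?_
  have h1z : 0 ≤ 1 - z := sub_nonneg.2 hz.2.le
  simp only [add_sub_cancel_right]
  rw [mul_rpow hy.le hz.1.le, show y - y * z = y * (1 - z) by ring, mul_rpow hy.le h1z,
    rpow_add hy, rpow_add hy, rpow_one]
  ring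

theorem intervalIntegrable_rpow_mul_rpow_sub {c β y : ℝ} (hc : -1 < c) (hβ : -1 < β)
    (hy : 0 < y) : IntervalIntegrable (fun x => x ^ c * (y - x) ^ β) volume 0 y := by
  have hleft : IntervalIntegrable (fun x => x ^ c * (y - x) ^ β) volume 0 (y / 2) := by
    refine (intervalIntegral.intervalIntegrable_rpow' hc).mul_continuousOn ?_
    refine ContinuousOn.rpow_const (by fun_prop) fun x hx => Or.inl ?_
    rw [uIcc_of_le (by positivity)] at hx
    linarith [hx.2]
  have hright : IntervalIntegrable (fun x => x ^ c * (y - x) ^ β) volume (y / 2) y := by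
    have h := (intervalIntegral.intervalIntegrable_rpow' hβ (a := 0) (b := y / 2)).comp_sub_left y
    rw [sub_zero, show y - y / 2 = y / 2 by ring] at h
    refine h.symm.continuousOn_mul (ContinuousOn.rpow_const continuousOn_id fun x hx => Or.inl ?_)
    rw [uIcc_of_le (by linarith)] at hx
    linarith [hx.1]
  exact hleft.trans hright

theorem integral_rpow_Ioo {p b : ℝ} (hp : -1 < p) (hb : 0 < b) :
    ∫ t in Ioo 0 b, t ^ p = b ^ (p + 1) / (p + 1) := by
  rw [← integral_Ioc_eq_integral_Ioo, ← intervalIntegral.integral_of_le hb.le,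
    integral_rpow (Or.inl hp), zero_rpow (by linarith), sub_zero]

theorem lintegral_Ioo_rpow_mul_rpow_mul_abs_sub {c β y : ℝ} (hc : -1 < c) (hβ : -1 < β)
    (hy : 0 < y) :
    ∫⁻ x in Ioo 0 y, ENNReal.ofReal (x ^ c * y ^ c * |x - y| ^ β)
      = ENNReal.ofReal (betaFn (c + 1) (β + 1) * y ^ (2 * c + β + 1)) := by
  have hEq : EqOn (fun x => x ^ c * y ^ c * |x - y| ^ β) (fun x => y ^ c * (x ^ c * (y - x) ^ β))
      (Ioo 0 y) := fun x hx => by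
    simp only
    rw [abs_sub_comm, abs_of_pos (sub_pos.2 hx.2)]
    ring
  have hint : IntegrableOn (fun x => y ^ c * (x ^ c * (y - x) ^ β)) (Ioo 0 y) :=
    ((intervalIntegrable_iff_integrableOn_Ioo_of_le hy.le).1
      (intervalIntegrable_rpow_mul_rpow_sub hc hβ hy)).const_mul _
  rw [setLIntegral_congr_fun measurableSet_Ioo fun x hx => congrArg ENNReal.ofReal (hEq hx),
    ← ofReal_integral_eq_lintegral_ofReal hint, integral_const_mul,
    integral_rpow_mul_rpow_sub hy, ← mul_assoc, ← rpow_add hy, mul_comm]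
  · ring_nf
  · exact (ae_restrict_iff' measurableSet_Ioo).2 (Filter.Eventually.of_forall fun x hx =>
      mul_nonneg (rpow_nonneg hy.le _)
        (mul_nonneg (rpow_nonneg hx.1.le _) (rpow_nonneg (sub_nonneg.2 hx.2.le) _)))

theorem integral_Ioo_Ioo_rpow_mul_rpow_mul_abs_sub {c β H : ℝ} (hc : -1 < c) (hβ : -1 < β)
    (hcβ : 0 < 2 * c + β + 2) (hH : 0 < H) :
    ∫ y in Ioo 0 H, ∫ x in Ioo 0 H, x ^ c * y ^ c * |x - y| ^ β
      = 2 * betaFn (c + 1) (β + 1) * H ^ (2 * c + β + 2) / (2 * c + β + 2) := by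
  set B := betaFn (c + 1) (β + 1)
  have hp : -1 < 2 * c + β + 1 := by linarith
  have hmeas : Measurable (Function.uncurry fun x y : ℝ =>
      ENNReal.ofReal (x ^ c * y ^ c * |x - y| ^ β)) := by
    fun_prop
  have htriangle : ∀ y ∈ Ioo 0 H,
      ∫⁻ x in Ioo 0 H ∩ Iio y, ENNReal.ofReal (x ^ c * y ^ c * |x - y| ^ β)
        = ENNReal.ofReal (B * y ^ (2 * c + β + 1)) := fun y hy => by
    rw [Ioo_inter_Iio, min_eq_right hy.2.le,
      lintegral_Ioo_rpow_mul_rpow_mul_abs_sub hc hβ hy.1]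
  have hlint : ∫⁻ y in Ioo 0 H, ∫⁻ x in Ioo 0 H, ENNReal.ofReal (x ^ c * y ^ c * |x - y| ^ β)
      = ENNReal.ofReal (2 * B * H ^ (2 * c + β + 2) / (2 * c + β + 2)) := by
    rw [lintegral_lintegral_eq_two_mul_of_symm hmeas ?symm,
      setLIntegral_congr_fun measurableSet_Ioo htriangle,
      ← ofReal_integral_eq_lintegral_ofReal, integral_const_mul, integral_rpow_Ioo hp hH]
    · rw [← ENNReal.ofReal_ofNat 2, ← ENNReal.ofReal_mul zero_le_two]
      congr 1
      ring_nf
    · exact ((intervalIntegral.integrableOn_Ioo_rpow_iff hH).2 hp).const_mul B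
    · exact (ae_restrict_iff' measurableSet_Ioo).2 (Filter.Eventually.of_forall fun y hy =>
        mul_nonneg (betaFn_nonneg _ _) (rpow_nonneg hy.1.le _))
    · intro x y
      rw [abs_sub_comm, mul_comm (x ^ c)]
  have hmeas' : Measurable (Function.uncurry fun y x : ℝ => x ^ c * y ^ c * |x - y| ^ β) := by
    fun_prop
  rw [integral_integral_eq_toReal_lintegral_lintegral hmeas' ?_ (hlint ▸ ENNReal.ofReal_ne_top),
    hlint, ENNReal.toReal_ofReal]
  · have := betaFn_nonneg (c + 1) (β + 1)
    positivity
  · filter_upwards [ae_restrict_mem measurableSet_Ioo] with y hy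
    filter_upwards [ae_restrict_mem measurableSet_Ioo] with x hx
    exact mul_nonneg (mul_nonneg (rpow_nonneg hx.1.le _) (rpow_nonneg hy.1.le _))
      (rpow_nonneg (abs_nonneg _) _)

theorem second_kind_fOU_variance_general
    {Ω : Type*} [MeasureSpace Ω]
    (H : ℝ) (hH : H ∈ Set.Ioo (1/2 : ℝ) 1) (α : ℝ) (hα : 0 < α)
    (U : Ω → ℝ)
    (hU : ∫ ω, (U ω) ^ 2 ∂ℙ
      = (H ^ ((1-α)*H)) ^ 2 * (H * (2*H-1)) *
          ∫ y in Set.Ioo (0:ℝ) H, ∫ x in Set.Ioo (0:ℝ) H,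
            x ^ ((α-1)*H) * y ^ ((α-1)*H) * |x - y| ^ (2*H-2)) :
    ∫ ω, (U ω) ^ 2 ∂ℙ
      = (2*H-1) * H ^ (2*H) / α * betaFn (1 - H + α*H) (2*H - 1) := by
  obtain ⟨hH_gt, hH_lt⟩ := hH
  have hH0 : 0 < H := by linarith
  have hαH : 0 < α * H := by positivity
  rw [hU, integral_Ioo_Ioo_rpow_mul_rpow_mul_abs_sub (by nlinarith) (by linarith) (by nlinarith) hH0,
    show 2 * ((α - 1) * H) + (2 * H - 2) + 2 = 2 * (α * H) by ring,
    show (α - 1) * H + 1 = 1 - H + α * H by ring, show 2 * H - 2 + 1 = 2 * H - 1 by ring]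
  have hpow : (H ^ ((1 - α) * H)) ^ 2 * H ^ (2 * (α * H)) = H ^ (2 * H) := by
    rw [← rpow_natCast, ← rpow_mul hH0.le, ← rpow_add hH0]
    ring_nf
  rw [← hpow]
  field_simp

theorem second_kind_fOU_variance
    {Ω : Type*} [MeasureSpace Ω] [IsProbabilityMeasure (ℙ : Measure Ω)]
    (H : ℝ) (hH : H ∈ Set.Ioo (1/2 : ℝ) 1) (α : ℝ) (hα : 0 < α)
    (U : Ω → ℝ)
    (hU : ∫ ω, (U ω) ^ 2 ∂ℙ
      = (H ^ ((1-α)*H)) ^ 2 * (H * (2*H-1)) *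
          ∫ y in Set.Ioo (0:ℝ) H, ∫ x in Set.Ioo (0:ℝ) H,
            x ^ ((α-1)*H) * y ^ ((α-1)*H) * |x - y| ^ (2*H-2)) :
    ∫ ω, (U ω) ^ 2 ∂ℙ
      = (2*H-1) * H ^ (2*H) / α * betaFn (1 - H + α*H) (2*H - 1) :=
  second_kind_fOU_variance_general H hH α hα U hU
end
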